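/- arXiv:1901.03774 — 2 statements merged into one kernel-verified Lean document; each statement's English description precedes it below -/
import Mathlib

section
/- Let B be a unital C*-algebra and let u, v ∈ B be commuting unitaries. Then the Loring element e(u,v) ∈ M₂(B) is a projection: e(u,v)* = e(u,v) and e(u,v)² = e(u,v). -/
/-!
Write `a = f(u)`, `b = g(u)`, `c = h(u)` and `z = b + c v`, so that `e = [[a, z], [z*, 1 - a]]`
with `a` self-adjoint. Such a matrix is a projection as soon as `a` commutes with `z` and
`z z* = z* z = a - a²`. Everything in sight commutes, since `v` commutes with `u` and hence with
every `φ(u)`; the cross terms of `z z*` and `z* z` vanish because `b c = 0` and `v* v = v v* = 1`,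
leaving `b² + c²`, which is `a - a²` by `f² + g² + h² = f` on the spectrum of `u`.
-/

open Complex

lemma Commute.star_left_of_mem_unitary {R : Type*} [Monoid R] [StarMul R] {v x : R}
    (hv : v ∈ unitary R) (h : Commute v x) : Commute (star v) x := by
  rw [commute_unitary_iff_star_right_conjugate (Unitary.star_mem hv), _root_.star_star]
  exact (commute_unitary_iff_star_left_conjugate hv).mp h

section Ring

variable {R : Type*} [Ring R] [StarRing R]

theorem isStarProjection_fin_two_of_commute {a z : R} (ha : IsSelfAdjoint a) (haz : Commute a z)
    (hzz : z * star z = a - a * a) (hzz' : star z * z = a - a * a) :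
    IsStarProjection !![a, z; star z, 1 - a] := by
  have haz' : Commute a (star z) := by simpa [ha.star_eq] using haz.star_star
  refine ⟨?_, ?_⟩
  · rw [IsIdempotentElem, Matrix.mul_fin_two, hzz, hzz', haz.eq, ← haz'.eq]
    congr 1
    noncomm_ring
  · ext i j
    fin_cases i <;> fin_cases j <;> simp [ha.star_eq]

variable {b c v : R}

theorem add_mul_unitary_mul_star (hb : IsSelfAdjoint b) (hc : IsSelfAdjoint c)
    (hbc : b * c = 0) (hcb : c * b = 0) (hv : v ∈ unitary R)
    (hvb : Commute v b) :
    (b + c * v) * star (b + c * v) = b * b + c * c := by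
  have hvb' := hvb.star_left_of_mem_unitary hv
  rw [star_add, star_mul, hb.star_eq, hc.star_eq]
  calc (b + c * v) * (b + star v * c)
      = b * (star v * c) + b * b + c * (v * star v) * c + c * (v * b) := by noncomm_ring
    _ = b * b + c * c := by
      rw [← mul_assoc, ← hvb'.eq, mul_assoc, hbc, Unitary.mul_star_self_of_mem hv, hvb.eq,
        ← mul_assoc, hcb]
      noncomm_ring

theorem star_add_mul_unitary_mul (hb : IsSelfAdjoint b) (hc : IsSelfAdjoint c)
    (hbc : b * c = 0) (hcb : c * b = 0) (hv : v ∈ unitary R)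
    (hvc : Commute v c) :
    star (b + c * v) * (b + c * v) = b * b + c * c := by
  rw [star_add, star_mul, hb.star_eq, hc.star_eq]
  calc (b + star v * c) * (b + c * v)
      = star v * (c * b) + star v * c * c * v + b * b + b * c * v := by noncomm_ring
    _ = b * b + c * c := by
      rw [hcb, hbc, mul_assoc (star v * c), ← hvc.eq, ← mul_assoc,
        (commute_unitary_iff_star_left_conjugate hv).mp hvc]
      noncomm_ring

theorem isStarProjection_loring {a : R} (ha : IsSelfAdjoint a) (hb : IsSelfAdjoint b)
    (hc : IsSelfAdjoint c) (hab : Commute a b) (hac : Commute a c) (hbc : b * c = 0)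
    (hsum : a - a * a = b * b + c * c) (hv : v ∈ unitary R) (hva : Commute v a)
    (hvb : Commute v b) (hvc : Commute v c) :
    IsStarProjection !![a, b + c * v; star v * c + b, 1 - a] := by
  have hcb : c * b = 0 := by simpa [hb.star_eq, hc.star_eq] using congrArg star hbc
  have hproj := isStarProjection_fin_two_of_commute ha (hab.add_right (hac.mul_right hva.symm))
    (by rw [add_mul_unitary_mul_star hb hc hbc hcb hv hvb, hsum])
    (by rw [star_add_mul_unitary_mul hb hc hbc hcb hv hvc, hsum])
  rwa [star_add, star_mul, hb.star_eq, hc.star_eq, add_comm b (star v * c)] at hproj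

end Ring

section CStarAlgebra

variable {A : Type*} [CStarAlgebra A]

lemma isSelfAdjoint_cfc_ofReal (φ : ℂ → ℝ) (u : A) :
    IsSelfAdjoint (cfc (fun z => (φ z : ℂ)) u) := by
  simp [isSelfAdjoint_iff, ← cfc_star]

lemma Commute.cfc_of_mem_unitary {u v : A} (hv : v ∈ unitary A) (huv : Commute u v)
    (φ : ℂ → ℂ) : Commute v (cfc φ u) :=
  (huv.cfc (commute_star_comm.mpr (huv.symm.star_left_of_mem_unitary hv).symm) φ).symm

end CStarAlgebra

theorem loring_element_projection_general {B : Type*} [CStarAlgebra B]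
    (f g h : ℂ → ℝ)
    (hf : ContinuousOn f (Metric.sphere (0 : ℂ) 1))
    (hg : ContinuousOn g (Metric.sphere (0 : ℂ) 1))
    (hh : ContinuousOn h (Metric.sphere (0 : ℂ) 1))
    (hsum : ∀ z : ℂ, ‖z‖ = 1 → (f z) ^ 2 + (g z) ^ 2 + (h z) ^ 2 = f z)
    (hgh : ∀ z : ℂ, ‖z‖ = 1 → g z * h z = 0)
    (u v : B) (hu : u ∈ unitary B) (hv : v ∈ unitary B)
    (huv : u * v = v * u)
    (fu gu hu' : B)
    (hfu : fu = cfc (fun z : ℂ => (f z : ℂ)) u)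
    (hgu : gu = cfc (fun z : ℂ => (g z : ℂ)) u)
    (hhu : hu' = cfc (fun z : ℂ => (h z : ℂ)) u)
    (e : Matrix (Fin 2) (Fin 2) B)
    (he : e = !![fu, gu + hu' * v; star v * hu' + gu, 1 - fu]) :
    star e = e ∧ e * e = e := by
  have : IsStarNormal u := isStarNormal_of_mem_unitary hu
  have hspec (z) (hz : z ∈ spectrum ℂ u) : ‖z‖ = 1 := spectrum.norm_eq_one_of_unitary hu hz
  have hcont {φ : ℂ → ℝ} (hφ : ContinuousOn φ (Metric.sphere 0 1)) :
      ContinuousOn (fun z => (φ z : ℂ)) (spectrum ℂ u) :=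
    (continuous_ofReal.comp_continuousOn hφ).mono (spectrum.subset_circle_of_unitary hu)
  -- these are picked up by the `cfc_cont_tac` autoparameters of `cfc_mul` and `cfc_add`
  have := hcont hf; have := hcont hg; have := hcont hh
  have hgh' : gu * hu' = 0 := by
    rw [hgu, hhu, ← cfc_mul .., ← cfc_const_zero ℂ u]
    exact cfc_congr fun z hz => by exact_mod_cast hgh z (hspec z hz)
  have hsum' : fu - fu * fu = gu * gu + hu' * hu' := by
    rw [sub_eq_iff_eq_add', ← add_assoc, hfu, hgu, hhu, ← cfc_mul .., ← cfc_mul .., ← cfc_mul ..,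
      ← cfc_add .., ← cfc_add ..]
    exact cfc_congr fun z hz => by simp only [← sq]; exact_mod_cast (hsum z (hspec z hz)).symm
  have hvcfc := Commute.cfc_of_mem_unitary hv huv
  subst hfu hgu hhu he
  obtain ⟨hidem, hsa⟩ := isStarProjection_loring (isSelfAdjoint_cfc_ofReal ..)
    (isSelfAdjoint_cfc_ofReal ..) (isSelfAdjoint_cfc_ofReal ..) (cfc_commute_cfc ..)
    (cfc_commute_cfc ..) hgh' hsum' hv (hvcfc _) (hvcfc _) (hvcfc _)
  exact ⟨hsa, hidem⟩

/-- If `u, v` are commuting unitaries in a unital C*-algebra `B`, then the Loring element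
`e(u,v) ∈ M₂(B)` is a projection: `e(u,v)* = e(u,v)` and `e(u,v)² = e(u,v)`. -/
theorem loring_element_projection {B : Type*} [CStarAlgebra B]
    (f g h : ℂ → ℝ)
    (hf : ContinuousOn f (Metric.sphere (0 : ℂ) 1))
    (hg : ContinuousOn g (Metric.sphere (0 : ℂ) 1))
    (hh : ContinuousOn h (Metric.sphere (0 : ℂ) 1))
    (hrange : ∀ z : ℂ, ‖z‖ = 1 →
      f z ∈ Set.Icc (0 : ℝ) 1 ∧ g z ∈ Set.Icc (0 : ℝ) 1 ∧ h z ∈ Set.Icc (0 : ℝ) 1)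
    (hsum : ∀ z : ℂ, ‖z‖ = 1 → (f z) ^ 2 + (g z) ^ 2 + (h z) ^ 2 = f z)
    (hgh : ∀ z : ℂ, ‖z‖ = 1 → g z * h z = 0)
    (hf1 : f 1 = 1) (hg1 : g 1 = 0) (hh1 : h 1 = 0)
    (u v : B) (hu : u ∈ unitary B) (hv : v ∈ unitary B)
    (huv : u * v = v * u)
    (fu gu hu' : B)
    (hfu : fu = cfc (fun z : ℂ => (f z : ℂ)) u)
    (hgu : gu = cfc (fun z : ℂ => (g z : ℂ)) u)
    (hhu : hu' = cfc (fun z : ℂ => (h z : ℂ)) u)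
    (e : Matrix (Fin 2) (Fin 2) B)
    (he : e = !![fu, gu + hu' * v; star v * hu' + gu, 1 - fu]) :
    star e = e ∧ e * e = e :=
  loring_element_projection_general f g h hf hg hh hsum hgh u v hu hv huv fu gu hu' hfu hgu hhu e he
end

section
/- There exists δ > 0 such that for every unital C*-algebra B and all unitaries u, v ∈ B with ‖uv − vu‖ ≤ δ, the real number 1/2 does not belong to the spectrum of the self-adjoint element e(u,v) ∈ M₂(B). -/
open Complex

universe u

/-!
For a continuous function `ψ` on the circle, `ψ(u)` almost commutes with every unitary `v` that
almost commutes with the unitary `u`, with a `δ` depending only on `ψ` and `ε`: the functions with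
this property form a closed ⋆-subalgebra of `C(𝕊, ℂ)` containing the identity, hence all of it by
Stone–Weierstrass. Applied to `F = f(u)`, `G = g(u)`, `H = h(u)`, the relations `f² + g² + h² = f`
and `gh = 0` turn every entry of `e² - e` into a combination of commutators with `v`, so
`‖e² - e‖ ≤ 3ε`. Once this is below `1/4`, `(1/2 - e)² = 1/4 + (e² - e)` is invertible, hence so
is `1/2 - e`.
-/

open Filter Topology

local notation "𝕊" => Metric.sphere (0 : ℂ) 1

attribute [local instance] LieRing.ofAssociativeRing

section Commutator

variable {B : Type*} [CStarAlgebra B] {v : B}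

lemma norm_lie_le_of_mem_unitary (hv : v ∈ unitary B) (x : B) : ‖⁅x, v⁆‖ ≤ 2 * ‖x‖ := by
  calc ‖⁅x, v⁆‖ ≤ ‖x * v‖ + ‖v * x‖ := by rw [Ring.lie_def]; exact norm_sub_le _ _
    _ = 2 * ‖x‖ := by
      rw [CStarRing.norm_mul_mem_unitary x hv, CStarRing.norm_mem_unitary_mul x hv]; ring

lemma norm_star_lie_eq_of_mem_unitary (hv : v ∈ unitary B) (x : B) :
    ‖⁅star v, x⁆‖ = ‖⁅x, v⁆‖ := by
  obtain ⟨hvv, hvv'⟩ := Unitary.mem_iff.mp hv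
  have hconj : ⁅star v, x⁆ = star v * ⁅x, v⁆ * star v := by
    simp only [Ring.lie_def, mul_sub, sub_mul, mul_assoc, hvv']
    rw [← mul_assoc (star v) v, hvv, one_mul, mul_one]
  have hv' := Unitary.star_mem hv
  rw [hconj, CStarRing.norm_mul_mem_unitary _ hv', CStarRing.norm_mem_unitary_mul _ hv']

lemma norm_mul_lie_le {A : Type*} [NormedRing A] (x y v : A) :
    ‖⁅x * y, v⁆‖ ≤ ‖x‖ * ‖⁅y, v⁆‖ + ‖⁅x, v⁆‖ * ‖y‖ := by
  have hleibniz : ⁅x * y, v⁆ = x * ⁅y, v⁆ + ⁅x, v⁆ * y := by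
    simp only [Ring.lie_def]; noncomm_ring
  rw [hleibniz]
  exact (norm_add_le _ _).trans (add_le_add (norm_mul_le _ _) (norm_mul_le _ _))

end Commutator

/-- `ψ ↦ ψ(u)` on the fixed algebra `C(𝕊, ℂ)`, independent of the spectrum of `u`. -/
noncomputable def circleCFCHom {B : Type*} [CStarAlgebra B] {u : B} (hu : u ∈ unitary B) :
    C(𝕊, ℂ) →⋆ₐ[ℂ] B :=
  (cfcHom (isStarNormal_of_mem_unitary hu)).comp
    (ContinuousMap.compStarAlgHom' ℂ ℂ
      (ContinuousMap.inclusion (spectrum.subset_circle_of_unitary hu)))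

section CircleCFC

variable {B : Type*} [CStarAlgebra B] {u : B} (hu : u ∈ unitary B)

lemma circleCFCHom_restrict {φ : ℂ → ℂ} (hφ : ContinuousOn φ 𝕊) :
    circleCFCHom hu ⟨Set.domRestrict 𝕊 φ, hφ.domRestrict⟩ = cfc φ u := by
  rw [cfc_apply φ u (isStarNormal_of_mem_unitary hu)
    (hφ.mono (spectrum.subset_circle_of_unitary hu))]
  rfl

lemma circleCFCHom_id : circleCFCHom hu ((ContinuousMap.id ℂ).restrict 𝕊) = u := by
  have := isStarNormal_of_mem_unitary hu
  exact (circleCFCHom_restrict hu continuousOn_id).trans (cfc_id' ℂ u)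

lemma norm_circleCFCHom_le (ψ : C(𝕊, ℂ)) : ‖circleCFCHom hu ψ‖ ≤ ‖ψ‖ :=
  NonUnitalStarAlgHom.norm_apply_le _ _

end CircleCFC

def PreservesAlmostCommutation (ψ : C(𝕊, ℂ)) : Prop :=
  ∀ ε > 0, ∃ δ > 0, ∀ (B : Type u) [CStarAlgebra B] (u v : B) (hu : u ∈ unitary B),
    v ∈ unitary B → ‖⁅u, v⁆‖ ≤ δ → ‖⁅circleCFCHom hu ψ, v⁆‖ ≤ ε

namespace PreservesAlmostCommutation

lemma const (c : ℂ) : PreservesAlmostCommutation.{u} (.const 𝕊 c) := by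
  intro ε hε
  refine ⟨1, one_pos, fun B _ u v hu _ _ => ?_⟩
  have : ContinuousMap.const 𝕊 c = algebraMap ℂ C(𝕊, ℂ) c := rfl
  rw [this, AlgHomClass.commutes, Ring.lie_def, Algebra.commutes, sub_self, norm_zero]
  exact hε.le

lemma restrict_id : PreservesAlmostCommutation.{u} ((ContinuousMap.id ℂ).restrict 𝕊) :=
  fun ε hε => ⟨ε, hε, fun B _ u v hu _ huv => by rwa [circleCFCHom_id]⟩

lemma star_restrict_id :
    PreservesAlmostCommutation.{u} (star ((ContinuousMap.id ℂ).restrict 𝕊)) :=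
  fun ε hε => ⟨ε, hε, fun B _ u v hu _ huv => by
    rwa [map_star, circleCFCHom_id, norm_star_lie_eq_of_mem_unitary hu, ← lie_skew, norm_neg]⟩

lemma add {ψ₁ ψ₂ : C(𝕊, ℂ)} (h₁ : PreservesAlmostCommutation.{u} ψ₁)
    (h₂ : PreservesAlmostCommutation.{u} ψ₂) : PreservesAlmostCommutation.{u} (ψ₁ + ψ₂) := by
  intro ε hε
  obtain ⟨δ₁, hδ₁, H₁⟩ := h₁ (ε / 2) (half_pos hε)
  obtain ⟨δ₂, hδ₂, H₂⟩ := h₂ (ε / 2) (half_pos hε)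
  refine ⟨min δ₁ δ₂, lt_min hδ₁ hδ₂, fun B _ u v hu hv huv => ?_⟩
  calc ‖⁅circleCFCHom hu (ψ₁ + ψ₂), v⁆‖
      ≤ ‖⁅circleCFCHom hu ψ₁, v⁆‖ + ‖⁅circleCFCHom hu ψ₂, v⁆‖ := by
        rw [map_add, add_lie]; exact norm_add_le _ _
    _ ≤ ε / 2 + ε / 2 := add_le_add (H₁ B u v hu hv (huv.trans (min_le_left _ _)))
        (H₂ B u v hu hv (huv.trans (min_le_right _ _)))
    _ = ε := add_halves ε

lemma mul {ψ₁ ψ₂ : C(𝕊, ℂ)} (h₁ : PreservesAlmostCommutation.{u} ψ₁)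
    (h₂ : PreservesAlmostCommutation.{u} ψ₂) : PreservesAlmostCommutation.{u} (ψ₁ * ψ₂) := by
  intro ε hε
  obtain ⟨δ₁, hδ₁, H₁⟩ := h₁ (ε / (2 * (‖ψ₂‖ + 1))) (by positivity)
  obtain ⟨δ₂, hδ₂, H₂⟩ := h₂ (ε / (2 * (‖ψ₁‖ + 1))) (by positivity)
  refine ⟨min δ₁ δ₂, lt_min hδ₁ hδ₂, fun B _ u v hu hv huv => ?_⟩
  have e₁ := H₁ B u v hu hv (huv.trans (min_le_left _ _))
  have e₂ := H₂ B u v hu hv (huv.trans (min_le_right _ _))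
  have n₁ := norm_circleCFCHom_le hu ψ₁
  have n₂ := norm_circleCFCHom_le hu ψ₂
  calc ‖⁅circleCFCHom hu (ψ₁ * ψ₂), v⁆‖
      ≤ ‖ψ₁‖ * (ε / (2 * (‖ψ₁‖ + 1))) + ε / (2 * (‖ψ₂‖ + 1)) * ‖ψ₂‖ := by
        rw [map_mul]
        refine (norm_mul_lie_le _ _ _).trans (add_le_add ?_ ?_) <;> gcongr
    _ ≤ ε / 2 + ε / 2 := by
        have key (a : ℝ) (ha : 0 ≤ a) : a * (ε / (2 * (a + 1))) ≤ ε / 2 := by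
          field_simp; nlinarith
        rw [mul_comm _ ‖ψ₂‖]
        exact add_le_add (key _ (norm_nonneg _)) (key _ (norm_nonneg _))
    _ = ε := add_halves ε

lemma of_frequently {ψ : C(𝕊, ℂ)} (h : ∃ᶠ ψ' in 𝓝 ψ, PreservesAlmostCommutation.{u} ψ') :
    PreservesAlmostCommutation.{u} ψ := by
  intro ε hε
  obtain ⟨ψ', hψ', hdist⟩ :=
    (h.and_eventually (Metric.ball_mem_nhds ψ (by positivity : 0 < ε / 4))).exists
  obtain ⟨δ, hδ, H⟩ := hψ' (ε / 2) (half_pos hε)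
  refine ⟨δ, hδ, fun B _ u v hu hv huv => ?_⟩
  have hclose : ‖circleCFCHom hu (ψ - ψ')‖ ≤ ε / 4 :=
    (norm_circleCFCHom_le hu _).trans (by rw [← dist_eq_norm, dist_comm]; exact hdist.le)
  calc ‖⁅circleCFCHom hu ψ, v⁆‖
      ≤ ‖⁅circleCFCHom hu (ψ - ψ'), v⁆‖ + ‖⁅circleCFCHom hu ψ', v⁆‖ := by
        rw [map_sub, sub_lie]; exact norm_le_norm_sub_add _ _
    _ ≤ 2 * (ε / 4) + ε / 2 := by
        gcongr
        · exact (norm_lie_le_of_mem_unitary hv _).trans (by gcongr)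
        · exact H B u v hu hv huv
    _ = ε := by ring

end PreservesAlmostCommutation

theorem preservesAlmostCommutation (ψ : C(𝕊, ℂ)) : PreservesAlmostCommutation.{u} ψ :=
  ψ.induction_on_of_compact .const .restrict_id .star_restrict_id (fun _ _ => .add)
    (fun _ _ => .mul) (fun _ => .of_frequently)

theorem exists_forall_norm_lie_cfc_le {φ : ℂ → ℂ} (hφ : ContinuousOn φ 𝕊) {ε : ℝ}
    (hε : 0 < ε) :
    ∃ δ > 0, ∀ (B : Type u) [CStarAlgebra B] (u v : B), u ∈ unitary B → v ∈ unitary B →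
      ‖⁅u, v⁆‖ ≤ δ → ‖⁅cfc φ u, v⁆‖ ≤ ε := by
  obtain ⟨δ, hδ, H⟩ := preservesAlmostCommutation.{u} ⟨_, hφ.domRestrict⟩ ε hε
  exact ⟨δ, hδ, fun B _ u v hu hv huv => circleCFCHom_restrict hu hφ ▸ H B u v hu hv huv⟩

theorem half_notMem_spectrum_of_norm_mul_self_sub_lt {A : Type*} [NormedRing A]
    [NormedAlgebra ℂ A] [CompleteSpace A] {e : A} (he : ‖e * e - e‖ < 1 / 4) :
    (1 / 2 : ℂ) ∉ spectrum ℂ e := by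
  set a := algebraMap ℂ A (1 / 2) - e
  have hsq : a * a = algebraMap ℂ A (1 / 4) * (1 - (-4 : ℂ) • (e * e - e)) := by
    simp only [a, Algebra.algebraMap_eq_smul_one, sub_mul, mul_sub, smul_mul_assoc,
      mul_smul_comm, one_mul, mul_one, smul_sub, smul_smul]
    module
  have hsmall : ‖(-4 : ℂ) • (e * e - e)‖ < 1 := by
    rw [norm_smul]; norm_num; linarith
  have hunit : IsUnit (a * a) := hsq ▸
    ((isUnit_iff_ne_zero.mpr (by norm_num)).map _).mul (Units.oneSub _ hsmall).isUnit
  exact spectrum.notMem_iff.mpr ((Commute.refl a).isUnit_mul_iff.mp hunit).1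

def loringMatrix {R : Type*} [Ring R] [Star R] (F G H v : R) : Matrix (Fin 2) (Fin 2) R :=
  !![F, G + H * v; star v * H + G, 1 - F]

section Loring

variable {R : Type*} [Ring R] [StarRing R] {F G H v : R}

theorem loringMatrix_mul_self_sub (hv : v ∈ unitary R) (hFG : Commute F G) (hFH : Commute F H)
    (hGH : G * H = 0) (hHG : H * G = 0) (hsum : F * F + G * G + H * H = F) :
    loringMatrix F G H v * loringMatrix F G H v - loringMatrix F G H v =
      !![G * ⁅star v, H⁆ + H * ⁅v, G⁆, H * ⁅F, v⁆; ⁅star v, F⁆ * H, star v * ⁅H * H, v⁆] := by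
  obtain ⟨hvv, hvv'⟩ := Unitary.mem_iff.mp hv
  rw [loringMatrix, Matrix.mul_fin_two]
  ext i j
  fin_cases i <;> fin_cases j <;> simp only [Fin.zero_eta, Fin.mk_one, Matrix.sub_apply,
    Matrix.of_apply, Matrix.cons_val', Matrix.cons_val_zero, Matrix.cons_val_one,
    Matrix.empty_val', Matrix.cons_val_fin_one, Ring.lie_def] <;> refine sub_eq_zero.mp ?_
  · calc _ = (F * F + G * G + H * H - F) + H * (v * star v - 1) * H + G * H * star v
          + H * G * v := by noncomm_ring
      _ = 0 := by simp [hsum, hvv', hGH, hHG]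
  · calc _ = (F * G - G * F) + (F * H - H * F) * v := by noncomm_ring
      _ = 0 := by simp [hFG.eq, hFH.eq]
  · calc _ = -(star v * (F * H - H * F)) - (F * G - G * F) := by noncomm_ring
      _ = 0 := by simp [hFG.eq, hFH.eq]
  · calc _ = star v * (H * G) + G * H * v + (F * F + G * G + H * H - F)
          + (star v * v - 1) * (H * H) := by noncomm_ring
      _ = 0 := by simp [hsum, hvv, hGH, hHG]

end Loring

section MatrixNorm

attribute [local instance] Matrix.linftyOpSeminormedAddCommGroup Matrix.linftyOpNormedRing
  Matrix.linftyOpNormedAlgebra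

lemma Matrix.linfty_opNorm_le_of_forall_sum_le {m n α : Type*} [Fintype m] [Fintype n]
    [SeminormedAddCommGroup α] (A : Matrix m n α) {c : ℝ} (hc : 0 ≤ c)
    (h : ∀ i, ∑ j, ‖A i j‖ ≤ c) : ‖A‖ ≤ c := by
  rw [Matrix.linfty_opNorm_def, ← Real.coe_toNNReal c hc, NNReal.coe_le_coe]
  refine Finset.sup_le fun i _ => ?_
  rw [← NNReal.coe_le_coe, NNReal.coe_sum, Real.coe_toNNReal c hc]
  exact h i

variable {B : Type*} [CStarAlgebra B] {F G H v : B} {ε : ℝ}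

theorem norm_loringMatrix_mul_self_sub_le (hv : v ∈ unitary B) (hFG : Commute F G)
    (hFH : Commute F H) (hGH : G * H = 0) (hHG : H * G = 0) (hsum : F * F + G * G + H * H = F)
    (hG : ‖G‖ ≤ 1) (hH : ‖H‖ ≤ 1)
    (hFv : ‖⁅F, v⁆‖ ≤ ε) (hGv : ‖⁅G, v⁆‖ ≤ ε) (hHv : ‖⁅H, v⁆‖ ≤ ε) :
    ‖loringMatrix F G H v * loringMatrix F G H v - loringMatrix F G H v‖ ≤ 3 * ε := by
  have hε : 0 ≤ ε := (norm_nonneg _).trans hFv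
  have hvG : ‖⁅v, G⁆‖ ≤ ε := by rwa [← lie_skew, norm_neg]
  have hvF : ‖⁅star v, F⁆‖ ≤ ε := by rwa [norm_star_lie_eq_of_mem_unitary hv]
  have hvH : ‖⁅star v, H⁆‖ ≤ ε := by rwa [norm_star_lie_eq_of_mem_unitary hv]
  have hHH : ‖star v * ⁅H * H, v⁆‖ ≤ 1 * ε + ε * 1 := by
    rw [CStarRing.norm_mem_unitary_mul _ (Unitary.star_mem hv)]
    exact (norm_mul_lie_le H H v).trans (by gcongr)
  rw [loringMatrix_mul_self_sub hv hFG hFH hGH hHG hsum]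
  refine Matrix.linfty_opNorm_le_of_forall_sum_le _ (by linarith) fun i => ?_
  fin_cases i <;> simp only [Fin.sum_univ_two, Fin.zero_eta, Fin.mk_one, Matrix.of_apply,
    Matrix.cons_val', Matrix.cons_val_zero, Matrix.cons_val_one, Matrix.empty_val',
    Matrix.cons_val_fin_one]
  · have := norm_add_le_of_le (norm_mul_le_of_le hG hvH) (norm_mul_le_of_le hH hvG)
    linarith [norm_mul_le_of_le hH hFv]
  · linarith [norm_mul_le_of_le hvF hH]

theorem half_notMem_spectrum_loringMatrix (hε : ε < 1 / 12) (hv : v ∈ unitary B)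
    (hFG : Commute F G) (hFH : Commute F H) (hGH : G * H = 0) (hHG : H * G = 0)
    (hsum : F * F + G * G + H * H = F) (hG : ‖G‖ ≤ 1) (hH : ‖H‖ ≤ 1)
    (hFv : ‖⁅F, v⁆‖ ≤ ε) (hGv : ‖⁅G, v⁆‖ ≤ ε) (hHv : ‖⁅H, v⁆‖ ≤ ε) :
    (1 / 2 : ℂ) ∉ spectrum ℂ (loringMatrix F G H v) := by
  -- the `ℓ∞` operator norm induces the product uniformity
  have : @CompleteSpace (Matrix (Fin 2) (Fin 2) B) PseudoMetricSpace.toUniformSpace :=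
    inferInstanceAs (CompleteSpace (Fin 2 → Fin 2 → B))
  refine half_notMem_spectrum_of_norm_mul_self_sub_lt ?_
  linarith [norm_loringMatrix_mul_self_sub_le hv hFG hFH hGH hHG hsum hG hH hFv hGv hHv]

end MatrixNorm

theorem half_notMem_spectrum_loringMatrix_cfc {B : Type*} [CStarAlgebra B] {u v : B}
    {f g h : ℂ → ℝ} (hu : u ∈ unitary B) (hv : v ∈ unitary B) (hf : ContinuousOn f 𝕊)
    (hg : ContinuousOn g 𝕊) (hh : ContinuousOn h 𝕊)
    (hsum : ∀ z : ℂ, ‖z‖ = 1 → f z ^ 2 + g z ^ 2 + h z ^ 2 = f z)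
    (hgh : ∀ z : ℂ, ‖z‖ = 1 → g z * h z = 0) {ε : ℝ} (hε : ε < 1 / 12)
    (hfv : ‖⁅cfc (fun z => (f z : ℂ)) u, v⁆‖ ≤ ε) (hgv : ‖⁅cfc (fun z => (g z : ℂ)) u, v⁆‖ ≤ ε)
    (hhv : ‖⁅cfc (fun z => (h z : ℂ)) u, v⁆‖ ≤ ε) :
    (1 / 2 : ℂ) ∉ spectrum ℂ (loringMatrix (cfc (fun z => (f z : ℂ)) u)
      (cfc (fun z => (g z : ℂ)) u) (cfc (fun z => (h z : ℂ)) u) v) := by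
  have := isStarNormal_of_mem_unitary hu
  have hspec : ∀ z ∈ spectrum ℂ u, ‖z‖ = 1 := fun z hz =>
    mem_sphere_zero_iff_norm.mp (spectrum.subset_circle_of_unitary hu hz)
  have hcont {k : ℂ → ℝ} (hk : ContinuousOn k 𝕊) :
      ContinuousOn (fun z => (k z : ℂ)) (spectrum ℂ u) :=
    (continuous_ofReal.comp_continuousOn hk).mono (spectrum.subset_circle_of_unitary hu)
  have hF := hcont hf
  have hG := hcont hg
  have hH := hcont hh
  have hGH : cfc (fun z => (g z : ℂ)) u * cfc (fun z => (h z : ℂ)) u = 0 := by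
    rw [← cfc_mul .., ← cfc_const_zero ℂ u]
    refine cfc_congr fun z hz => ?_
    exact_mod_cast hgh z (hspec z hz)
  have hsum' : cfc (fun z => (f z : ℂ)) u * cfc (fun z => (f z : ℂ)) u
      + cfc (fun z => (g z : ℂ)) u * cfc (fun z => (g z : ℂ)) u
      + cfc (fun z => (h z : ℂ)) u * cfc (fun z => (h z : ℂ)) u =
        cfc (fun z => (f z : ℂ)) u := by
    calc _ = cfc (fun z => (f z : ℂ) * f z + g z * g z + h z * h z) u := by
          rw [cfc_add .., cfc_add .., cfc_mul .., cfc_mul .., cfc_mul ..]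
      _ = _ := cfc_congr fun z hz => by
          exact_mod_cast (by linear_combination hsum z (hspec z hz) :
            f z * f z + g z * g z + h z * h z = f z)
  have hnorm {k : ℂ → ℝ} (hk : ∀ z : ℂ, ‖z‖ = 1 → k z ^ 2 ≤ 1) :
      ‖cfc (fun z => (k z : ℂ)) u‖ ≤ 1 := by
    refine norm_cfc_le zero_le_one fun z hz => ?_
    rw [norm_real, Real.norm_eq_abs, ← sq_le_one_iff_abs_le_one]
    exact hk z (hspec z hz)
  refine half_notMem_spectrum_loringMatrix hε hv (cfc_commute_cfc _ _ u)
    (cfc_commute_cfc _ _ u) hGH ((cfc_commute_cfc _ _ u).eq.trans hGH) hsum'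
    (hnorm fun z hz => ?_) (hnorm fun z hz => ?_) hfv hgv hhv
  -- `g² + h² = f - f² ≤ 1/4`
  all_goals nlinarith [hsum z hz, sq_nonneg (f z - 1 / 2), sq_nonneg (g z), sq_nonneg (h z)]

theorem loring_element_spectrum_avoids_half_general
    (f g h : ℂ → ℝ)
    (hf : ContinuousOn f (Metric.sphere (0 : ℂ) 1))
    (hg : ContinuousOn g (Metric.sphere (0 : ℂ) 1))
    (hh : ContinuousOn h (Metric.sphere (0 : ℂ) 1))
    (hsum : ∀ z : ℂ, ‖z‖ = 1 → (f z) ^ 2 + (g z) ^ 2 + (h z) ^ 2 = f z)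
    (hgh : ∀ z : ℂ, ‖z‖ = 1 → g z * h z = 0) :
    ∃ δ > (0 : ℝ), ∀ (B : Type u) (_ : CStarAlgebra B), ∀ u v : B,
      u ∈ unitary B → v ∈ unitary B → ‖u * v - v * u‖ ≤ δ →
      (1 / 2 : ℂ) ∉ spectrum ℂ
        (!![cfc (fun z : ℂ => (f z : ℂ)) u,
              cfc (fun z : ℂ => (g z : ℂ)) u + cfc (fun z : ℂ => (h z : ℂ)) u * v;
            star v * cfc (fun z : ℂ => (h z : ℂ)) u + cfc (fun z : ℂ => (g z : ℂ)) u,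
              1 - cfc (fun z : ℂ => (f z : ℂ)) u] : Matrix (Fin 2) (Fin 2) B) := by
  have hε : (0 : ℝ) < 1 / 13 := by norm_num
  obtain ⟨δf, hδf, Hf⟩ :=
    exists_forall_norm_lie_cfc_le.{u} (continuous_ofReal.comp_continuousOn hf) hε
  obtain ⟨δg, hδg, Hg⟩ :=
    exists_forall_norm_lie_cfc_le.{u} (continuous_ofReal.comp_continuousOn hg) hε
  obtain ⟨δh, hδh, Hh⟩ :=
    exists_forall_norm_lie_cfc_le.{u} (continuous_ofReal.comp_continuousOn hh) hε
  refine ⟨min δf (min δg δh), lt_min hδf (lt_min hδg hδh), fun B _ u v hu hv huv => ?_⟩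
  rw [← Ring.lie_def] at huv
  exact half_notMem_spectrum_loringMatrix_cfc hu hv hf hg hh hsum hgh
    (by norm_num : (1 / 13 : ℝ) < 1 / 12)
    (Hf B u v hu hv (huv.trans (min_le_left _ _)))
    (Hg B u v hu hv (huv.trans ((min_le_right _ _).trans (min_le_left _ _))))
    (Hh B u v hu hv (huv.trans ((min_le_right _ _).trans (min_le_right _ _))))

/-- There is a `δ > 0` such that for every unital C*-algebra `B` and all unitaries `u, v ∈ B`
with `‖uv - vu‖ ≤ δ`, the number `1/2` is not in the spectrum of the Loring element
`e(u,v) ∈ M₂(B)`. -/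
theorem loring_element_spectrum_avoids_half
    (f g h : ℂ → ℝ)
    (hf : ContinuousOn f (Metric.sphere (0 : ℂ) 1))
    (hg : ContinuousOn g (Metric.sphere (0 : ℂ) 1))
    (hh : ContinuousOn h (Metric.sphere (0 : ℂ) 1))
    (hrange : ∀ z : ℂ, ‖z‖ = 1 →
      f z ∈ Set.Icc (0 : ℝ) 1 ∧ g z ∈ Set.Icc (0 : ℝ) 1 ∧ h z ∈ Set.Icc (0 : ℝ) 1)
    (hsum : ∀ z : ℂ, ‖z‖ = 1 → (f z) ^ 2 + (g z) ^ 2 + (h z) ^ 2 = f z)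
    (hgh : ∀ z : ℂ, ‖z‖ = 1 → g z * h z = 0)
    (hf1 : f 1 = 1) (hg1 : g 1 = 0) (hh1 : h 1 = 0) :
    ∃ δ > (0 : ℝ), ∀ (B : Type u) (_ : CStarAlgebra B), ∀ u v : B,
      u ∈ unitary B → v ∈ unitary B → ‖u * v - v * u‖ ≤ δ →
      (1 / 2 : ℂ) ∉ spectrum ℂ
        (!![cfc (fun z : ℂ => (f z : ℂ)) u,
              cfc (fun z : ℂ => (g z : ℂ)) u + cfc (fun z : ℂ => (h z : ℂ)) u * v;
            star v * cfc (fun z : ℂ => (h z : ℂ)) u + cfc (fun z : ℂ => (g z : ℂ)) u,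
              1 - cfc (fun z : ℂ => (f z : ℂ)) u] : Matrix (Fin 2) (Fin 2) B) :=
  loring_element_spectrum_avoids_half_general f g h hf hg hh hsum hgh
end
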